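/- Under the change of variables z₁ = x₁, z_j = x_j/(1−x₁) (j = 2,…,d), if P(x) = p(z₁)q(z₂,…,z_d), then Ď2[P] = (D2 p)(z₁) q(z) + (p(z₁)/(1−z₁)) (M_{d−1}^{γ₂,…,γ_{d+1}} q)(z₂,…,z_d), where D2 = (1−z₁)∂²_{z₁} − (γ₂+⋯+γ_{d+1}+d)∂_{z₁} and M_{d−1}^{γ₂,…,γ_{d+1}} is the Appell–Lauricella operator in the variables z₂,…,z_d. -/

import Mathlib

/-- The partial derivative `∂f/∂xᵢ` at `x`. -/
noncomputable def pd {m : ℕ} (i : Fin m) (f : (Fin m → ℝ) → ℝ) (x : Fin m → ℝ) : ℝ :=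
  deriv (fun t : ℝ => f (Function.update x i t)) (x i)

open Filter Topology Finset
set_option maxHeartbeats 1000000

lemma pd_def {m : ℕ} (i : Fin m) (f : (Fin m → ℝ) → ℝ) (x : Fin m → ℝ) :
    pd i f x = deriv (fun t : ℝ => f (Function.update x i t)) (x i) := rfl

lemma pd_eq_fderiv {m : ℕ} {f : (Fin m → ℝ) → ℝ} {x : Fin m → ℝ}
    (hf : DifferentiableAt ℝ f x) (i : Fin m) :
    pd i f x = fderiv ℝ f x (Pi.single i 1) := by
  have h0 : HasFDerivAt f (fderiv ℝ f x) (Function.update x i (x i)) := by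
    rw [Function.update_eq_self]; exact hf.hasFDerivAt
  have h := h0.comp_hasDerivAt (x i) (hasDerivAt_update x i (x i))
  exact h.deriv

lemma single_eq_smul {m : ℕ} (v : Fin m → ℝ) (j : Fin m) :
    Pi.single j (v j) = v j • (Pi.single j (1:ℝ) : Fin m → ℝ) := by
  ext k
  rcases eq_or_ne k j with rfl | h
  · simp
  · simp [Pi.single_eq_of_ne h]

lemma fderiv_expand {m : ℕ} (f : (Fin m → ℝ) → ℝ) (w v : Fin m → ℝ) :
    fderiv ℝ f w v = ∑ j, v j * fderiv ℝ f w (Pi.single j 1) := by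
  conv_lhs => rw [← Finset.univ_sum_single v, map_sum]
  refine Finset.sum_congr rfl fun j _ => ?_
  rw [single_eq_smul v j, map_smul, smul_eq_mul]

lemma comp_hasDerivAt {m : ℕ} {f : (Fin m → ℝ) → ℝ} (hf : ContDiff ℝ (⊤ : ℕ∞) f)
    {w : ℝ → Fin m → ℝ} {w' : Fin m → ℝ} {t : ℝ} (hw : HasDerivAt w w' t) :
    HasDerivAt (fun s => f (w s)) (fderiv ℝ f (w t) w') t :=
  ((hf.differentiable (by simp)) (w t)).hasFDerivAt.comp_hasDerivAt t hw

lemma sum_Ioi_zero {n : ℕ} (f : Fin (n+1) → ℝ) :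
    ∑ i ∈ Finset.Ioi (0 : Fin (n+1)), f i = ∑ j : Fin n, f j.succ := by
  rw [show Finset.Ioi (0 : Fin (n+1)) = Finset.univ.map ⟨Fin.succ, Fin.succ_injective n⟩ by
    ext i
    simp [Fin.pos_iff_ne_zero, eq_comm, Fin.exists_succ_eq]]
  rw [Finset.sum_map]
  rfl

lemma sum_swap_Iio {n : ℕ} (F : Fin n → Fin n → ℝ) :
    ∑ j, ∑ k ∈ Finset.Iio j, F j k = ∑ j, ∑ k ∈ Finset.Ioi j, F k j := by
  rw [Finset.sum_sigma', Finset.sum_sigma']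
  refine Finset.sum_nbij' (fun i => ⟨i.2, i.1⟩) (fun i => ⟨i.2, i.1⟩) ?_ ?_ ?_ ?_ ?_ <;> simp

lemma double_sum_symm {n : ℕ} (F : Fin n → Fin n → ℝ) (hF : ∀ j k, F j k = F k j) :
    ∑ j, ∑ k, F j k = ∑ j, F j j + 2 * ∑ j, ∑ k ∈ Finset.Ioi j, F j k := by
  have h1 : ∀ j : Fin n, ∑ k, F j k
      = F j j + (∑ k ∈ Finset.Ioi j, F j k + ∑ k ∈ Finset.Iio j, F j k) := by
    intro j
    rw [Fintype.sum_eq_add_sum_compl j]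
    congr 1
    rw [← Finset.sum_disjUnion (Finset.disjoint_Ioi_Iio j)]
    apply Finset.sum_congr ?_ fun _ _ => rfl
    ext k
    simp [lt_or_lt_iff_ne, ne_comm]
  calc ∑ j, ∑ k, F j k
      = ∑ j, (F j j + (∑ k ∈ Finset.Ioi j, F j k + ∑ k ∈ Finset.Iio j, F j k)) :=
        Finset.sum_congr rfl fun j _ => h1 j
    _ = ∑ j, F j j + (∑ j, ∑ k ∈ Finset.Ioi j, F j k + ∑ j, ∑ k ∈ Finset.Iio j, F j k) := by
        rw [Finset.sum_add_distrib, Finset.sum_add_distrib]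
    _ = ∑ j, F j j + (∑ j, ∑ k ∈ Finset.Ioi j, F j k + ∑ j, ∑ k ∈ Finset.Ioi j, F k j) := by
        rw [sum_swap_Iio]
    _ = ∑ j, F j j + 2 * ∑ j, ∑ k ∈ Finset.Ioi j, F j k := by
        rw [show (∑ j, ∑ k ∈ Finset.Ioi j, F k j) = ∑ j, ∑ k ∈ Finset.Ioi j, F j k from
          Finset.sum_congr rfl fun j _ => Finset.sum_congr rfl fun k _ => hF k j]
        ring


noncomputable def qdf {m : ℕ} (q : (Fin m → ℝ) → ℝ) (j : Fin m) : (Fin m → ℝ) → ℝ :=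
  fun w => fderiv ℝ q w (Pi.single j 1)

lemma qdf_contDiff {m : ℕ} {q : (Fin m → ℝ) → ℝ} (hq : ContDiff ℝ (⊤ : ℕ∞) q) (j : Fin m) :
    ContDiff ℝ (⊤ : ℕ∞) (qdf q j) :=
  (hq.fderiv_right (by simp)).clm_apply contDiff_const

lemma pd_eq_qdf {m : ℕ} {q : (Fin m → ℝ) → ℝ} (hq : ContDiff ℝ (⊤ : ℕ∞) q) (j : Fin m) :
    pd j q = qdf q j :=
  funext fun w => pd_eq_fderiv ((hq.differentiable (by simp)) w) j

lemma pdpd_eq {m : ℕ} {q : (Fin m → ℝ) → ℝ} (hq : ContDiff ℝ (⊤ : ℕ∞) q) (i j : Fin m)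
    (w : Fin m → ℝ) :
    pd i (pd j q) w = fderiv ℝ (qdf q j) w (Pi.single i 1) := by
  rw [pd_eq_qdf hq j]
  exact pd_eq_fderiv (((qdf_contDiff hq j).differentiable (by simp)) w) i

lemma qdf_fderiv_symm {m : ℕ} {q : (Fin m → ℝ) → ℝ} (hq : ContDiff ℝ (⊤ : ℕ∞) q) (i j : Fin m)
    (w : Fin m → ℝ) :
    fderiv ℝ (qdf q j) w (Pi.single i 1) = fderiv ℝ (qdf q i) w (Pi.single j 1) := by
  have hd : Differentiable ℝ (fderiv ℝ q) := (hq.fderiv_right (m := (⊤ : ℕ∞)) (by simp)).differentiable (by simp)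
  have key : ∀ k : Fin m, fderiv ℝ (qdf q k) w
      = (fderiv ℝ (fderiv ℝ q) w).flip (Pi.single k 1) := by
    intro k
    have := fderiv_clm_apply (hd w) (differentiableAt_const (Pi.single k (1:ℝ)))
    unfold qdf
    simpa using this
  rw [key i, key j]
  exact second_derivative_symmetric (f := q) (fun y => ((hq.differentiable (by simp)) y).hasFDerivAt)
    ((hd w).hasFDerivAt) _ _

noncomputable def zmap {d : ℕ} (y : Fin (d + 2) → ℝ) : Fin (d + 1) → ℝ :=
  fun j => y j.succ / (1 - y 0)

lemma zmap_update_zero {d : ℕ} (y : Fin (d + 2) → ℝ) (t : ℝ) :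
    zmap (Function.update y 0 t) = fun j => y j.succ / (1 - t) := by
  funext j
  simp [zmap, Function.update_apply, Fin.succ_ne_zero]

lemma zmap_update_succ {d : ℕ} (y : Fin (d + 2) → ℝ) (j : Fin (d + 1)) (t : ℝ) :
    zmap (Function.update y j.succ t) = Function.update (zmap y) j (t / (1 - y 0)) := by
  funext k
  rcases eq_or_ne k j with rfl | h
  · simp [zmap, (Fin.succ_ne_zero k).symm]
  · simp [zmap, Function.update_apply, h, (Fin.succ_ne_zero j).symm,
      fun hc => h (Fin.succ_injective _ hc)]

/-- Curve A: moving the 0-th coordinate. -/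
lemma helperA {d : ℕ} {f : (Fin (d + 1) → ℝ) → ℝ} (hf : ContDiff ℝ (⊤ : ℕ∞) f)
    (y : Fin (d + 2) → ℝ) (hy : y 0 ≠ 1) :
    HasDerivAt (fun t => f (zmap (Function.update y 0 t)))
      (fderiv ℝ f (zmap y) (fun j => y j.succ / (1 - y 0) ^ 2)) (y 0) := by
  have hne : (1 : ℝ) - y 0 ≠ 0 := sub_ne_zero.2 (Ne.symm hy)
  have hw : HasDerivAt (fun t => fun j : Fin (d + 1) => y j.succ / (1 - t))
      (fun j => y j.succ / (1 - y 0) ^ 2) (y 0) := by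
    rw [hasDerivAt_pi]
    intro j
    have := (hasDerivAt_const (y 0) (y j.succ)).fun_div
      ((hasDerivAt_const (y 0) (1:ℝ)).fun_sub (hasDerivAt_id (y 0))) hne
    refine this.congr_deriv ?_
    simp only [id_eq]
    field_simp
    ring
  have h := comp_hasDerivAt hf hw
  have hz : (fun j : Fin (d+1) => y j.succ / (1 - y 0)) = zmap y := rfl
  rw [hz] at h
  convert h using 2
  rw [zmap_update_zero]

/-- Curve B: moving the (j+1)-th coordinate. -/
lemma helperB {d : ℕ} {f : (Fin (d + 1) → ℝ) → ℝ} (hf : ContDiff ℝ (⊤ : ℕ∞) f)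
    (y : Fin (d + 2) → ℝ) (hy : y 0 ≠ 1) (j : Fin (d + 1)) :
    HasDerivAt (fun t => f (zmap (Function.update y j.succ t)))
      ((1 - y 0)⁻¹ * fderiv ℝ f (zmap y) (Pi.single j 1)) (y j.succ) := by
  have hne : (1 : ℝ) - y 0 ≠ 0 := sub_ne_zero.2 (Ne.symm hy)
  have hcurve : HasDerivAt (fun t => Function.update (zmap y) j (t / (1 - y 0)))
      ((1 - y 0)⁻¹ • (Pi.single j (1:ℝ) : Fin (d+1) → ℝ)) (y j.succ) := by
    have hg : HasDerivAt (Function.update (zmap y) j) (Pi.single j (1:ℝ))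
        (y j.succ / (1 - y 0)) := hasDerivAt_update _ j _
    have hh : HasDerivAt (fun t : ℝ => t / (1 - y 0)) ((1 - y 0)⁻¹) (y j.succ) := by
      simpa [div_eq_mul_inv] using (hasDerivAt_id (y j.succ)).mul_const (1 - y 0)⁻¹
    exact hg.scomp (y j.succ) hh
  have h := comp_hasDerivAt hf hcurve
  have hval : Function.update (zmap y) j (y j.succ / (1 - y 0)) = zmap y := by
    rw [show y j.succ / (1 - y 0) = zmap y j from rfl, Function.update_eq_self]
  rw [hval, map_smul, smul_eq_mul] at h
  convert h using 2 with t
  rw [zmap_update_succ]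

section FirstDeriv

variable {d : ℕ} {p : ℝ → ℝ} {q : (Fin (d+1) → ℝ) → ℝ}

lemma first0 (hp : ContDiff ℝ (⊤ : ℕ∞) p) (hq : ContDiff ℝ (⊤ : ℕ∞) q)
    (y : Fin (d + 2) → ℝ) (hy : y 0 ≠ 1) :
    pd 0 (fun y => p (y 0) * q (zmap y)) y
      = deriv p (y 0) * q (zmap y)
        + p (y 0) * ∑ k, y k.succ / (1 - y 0) ^ 2 * qdf q k (zmap y) := by
  have hp0 : HasDerivAt p (deriv p (y 0)) (y 0) := ((hp.differentiable (by simp)) (y 0)).hasDerivAt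
  have h := hp0.fun_mul (helperA hq y hy)
  simp only [Function.update_eq_self] at h
  have hfun : (fun t => (fun y => p (y 0) * q (zmap y)) (Function.update y 0 t))
      = fun t => p t * q (zmap (Function.update y 0 t)) := by
    funext t; simp
  unfold pd
  rw [hfun, h.deriv]
  congr 1
  rw [fderiv_expand]
  rfl

lemma firstj (hp : ContDiff ℝ (⊤ : ℕ∞) p) (hq : ContDiff ℝ (⊤ : ℕ∞) q)
    (y : Fin (d + 2) → ℝ) (hy : y 0 ≠ 1) (j : Fin (d + 1)) :
    pd j.succ (fun y => p (y 0) * q (zmap y)) y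
      = p (y 0) * ((1 - y 0)⁻¹ * qdf q j (zmap y)) := by
  have h := (helperB hq y hy j).const_mul (p (y 0))
  have hfun : (fun t => (fun y => p (y 0) * q (zmap y)) (Function.update y j.succ t))
      = fun t => p (y 0) * q (zmap (Function.update y j.succ t)) := by
    funext t
    simp [Function.update_apply, (Fin.succ_ne_zero j).symm]
  unfold pd
  rw [hfun, h.deriv]
  rfl

end FirstDeriv

section SecondDeriv

open Filter

variable {d : ℕ} {p : ℝ → ℝ} {q : (Fin (d+1) → ℝ) → ℝ}

lemma pdjj (hp : ContDiff ℝ (⊤ : ℕ∞) p) (hq : ContDiff ℝ (⊤ : ℕ∞) q)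
    (x : Fin (d + 2) → ℝ) (hx : x 0 ≠ 1) (j : Fin (d + 1)) :
    pd j.succ (pd j.succ (fun y => p (y 0) * q (zmap y))) x
      = p (x 0) * ((1 - x 0)⁻¹ *
          ((1 - x 0)⁻¹ * fderiv ℝ (qdf q j) (zmap x) (Pi.single j 1))) := by
  have h0 : ∀ t, Function.update x j.succ t 0 = x 0 := fun t => by
    simp [Function.update_apply, (Fin.succ_ne_zero j).symm]
  have hev : (fun t => pd j.succ (fun y => p (y 0) * q (zmap y)) (Function.update x j.succ t))
      =ᶠ[𝓝 (x j.succ)]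
      (fun t => (fun y => p (y 0) * ((1 - y 0)⁻¹ * qdf q j (zmap y)))
        (Function.update x j.succ t)) :=
    Eventually.of_forall fun t => firstj hp hq _ (by rw [h0]; exact hx) j
  rw [pd_def, hev.deriv_eq]
  have hcurve_eq : (fun t => (fun y => p (y 0) * ((1 - y 0)⁻¹ * qdf q j (zmap y)))
        (Function.update x j.succ t))
      = fun t => p (x 0) * ((1 - x 0)⁻¹ * qdf q j (zmap (Function.update x j.succ t))) := by
    funext t; simp only [h0]
  rw [hcurve_eq]
  have H := ((helperB (qdf_contDiff hq j) x hx j).const_mul ((1 - x 0)⁻¹)).const_mul (p (x 0))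
  exact H.deriv

lemma pdj0 (hp : ContDiff ℝ (⊤ : ℕ∞) p) (hq : ContDiff ℝ (⊤ : ℕ∞) q)
    (x : Fin (d + 2) → ℝ) (hx : x 0 ≠ 1) (j : Fin (d + 1)) :
    pd j.succ (pd 0 (fun y => p (y 0) * q (zmap y))) x
      = deriv p (x 0) * ((1 - x 0)⁻¹ * qdf q j (zmap x))
        + p (x 0) * (1 / (1 - x 0) ^ 2 * qdf q j (zmap x)
            + ∑ k, x k.succ / (1 - x 0) ^ 2
                * ((1 - x 0)⁻¹ * fderiv ℝ (qdf q k) (zmap x) (Pi.single j 1))) := by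
  have h0 : ∀ t, Function.update x j.succ t 0 = x 0 := fun t => by
    simp [Function.update_apply, (Fin.succ_ne_zero j).symm]
  have hev : (fun t => pd 0 (fun y => p (y 0) * q (zmap y)) (Function.update x j.succ t))
      =ᶠ[𝓝 (x j.succ)]
      (fun t => (fun y => deriv p (y 0) * q (zmap y)
          + p (y 0) * ∑ k, y k.succ / (1 - y 0) ^ 2 * qdf q k (zmap y))
        (Function.update x j.succ t)) :=
    Eventually.of_forall fun t => first0 hp hq _ (by rw [h0]; exact hx)
  rw [pd_def, hev.deriv_eq]
  have hcurve_eq : (fun t => (fun y => deriv p (y 0) * q (zmap y)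
          + p (y 0) * ∑ k, y k.succ / (1 - y 0) ^ 2 * qdf q k (zmap y))
        (Function.update x j.succ t))
      = fun t => deriv p (x 0) * q (zmap (Function.update x j.succ t))
          + p (x 0) * ∑ k, Function.update x j.succ t k.succ / (1 - x 0) ^ 2
              * qdf q k (zmap (Function.update x j.succ t)) := by
    funext t; simp only [h0]
  rw [hcurve_eq]
  have hck : ∀ k : Fin (d + 1), HasDerivAt
      (fun t => Function.update x j.succ t k.succ / (1 - x 0) ^ 2)
      ((if k = j then (1:ℝ) else 0) / (1 - x 0) ^ 2) (x j.succ) := by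
    intro k
    rcases eq_or_ne k j with rfl | h
    · simp only [Function.update_self, if_pos rfl]
      exact (hasDerivAt_id _).div_const _
    · have : ∀ t, Function.update x j.succ t k.succ = x k.succ := fun t =>
        Function.update_of_ne (fun hc => h (Fin.succ_injective _ hc)) _ _
      simp only [this, if_neg h, zero_div]
      exact hasDerivAt_const _ _
  have hterm : ∀ k : Fin (d + 1), HasDerivAt
      (fun t => Function.update x j.succ t k.succ / (1 - x 0) ^ 2
          * qdf q k (zmap (Function.update x j.succ t)))
      ((if k = j then (1:ℝ) else 0) / (1 - x 0) ^ 2 * qdf q k (zmap x)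
        + x k.succ / (1 - x 0) ^ 2
            * ((1 - x 0)⁻¹ * fderiv ℝ (qdf q k) (zmap x) (Pi.single j 1))) (x j.succ) := by
    intro k
    have := (hck k).fun_mul (helperB (qdf_contDiff hq k) x hx j)
    simpa [Function.update_eq_self] using this
  have hsum := HasDerivAt.fun_sum (u := Finset.univ) fun k _ => hterm k
  have H := ((helperB hq x hx j).const_mul (deriv p (x 0))).fun_add (hsum.const_mul (p (x 0)))
  rw [H.deriv]
  have hsplit : ∑ k, ((if k = j then (1:ℝ) else 0) / (1 - x 0) ^ 2 * qdf q k (zmap x)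
        + x k.succ / (1 - x 0) ^ 2
            * ((1 - x 0)⁻¹ * fderiv ℝ (qdf q k) (zmap x) (Pi.single j 1)))
      = 1 / (1 - x 0) ^ 2 * qdf q j (zmap x)
        + ∑ k, x k.succ / (1 - x 0) ^ 2
            * ((1 - x 0)⁻¹ * fderiv ℝ (qdf q k) (zmap x) (Pi.single j 1)) := by
    rw [Finset.sum_add_distrib]
    congr 1
    rw [show (∑ k, (if k = j then (1:ℝ) else 0) / (1 - x 0) ^ 2 * qdf q k (zmap x))
        = ∑ k, (if k = j then 1 / (1 - x 0) ^ 2 * qdf q k (zmap x) else 0) from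
      Finset.sum_congr rfl fun k _ => by split_ifs <;> simp]
    rw [Finset.sum_ite_eq' Finset.univ j]
    simp
  rw [hsplit]
  rfl


lemma pd00 (hp : ContDiff ℝ (⊤ : ℕ∞) p) (hq : ContDiff ℝ (⊤ : ℕ∞) q)
    (x : Fin (d + 2) → ℝ) (hx : x 0 ≠ 1) :
    pd 0 (pd 0 (fun y => p (y 0) * q (zmap y))) x
      = deriv (deriv p) (x 0) * q (zmap x)
        + 2 * deriv p (x 0) * ∑ k, x k.succ / (1 - x 0) ^ 2 * qdf q k (zmap x)
        + p (x 0) * ∑ k, (2 * x k.succ / (1 - x 0) ^ 3 * qdf q k (zmap x)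
            + x k.succ / (1 - x 0) ^ 2
                * ∑ l, x l.succ / (1 - x 0) ^ 2
                    * fderiv ℝ (qdf q k) (zmap x) (Pi.single l 1)) := by
  have hu : (1 : ℝ) - x 0 ≠ 0 := sub_ne_zero.2 (Ne.symm hx)
  have hev : (fun t => pd 0 (fun y => p (y 0) * q (zmap y)) (Function.update x 0 t))
      =ᶠ[𝓝 (x 0)]
      (fun t => (fun y => deriv p (y 0) * q (zmap y)
          + p (y 0) * ∑ k, y k.succ / (1 - y 0) ^ 2 * qdf q k (zmap y))
        (Function.update x 0 t)) := by
    filter_upwards [eventually_ne_nhds hx] with t ht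
    exact first0 hp hq _ (by simpa using ht)
  rw [pd_def, hev.deriv_eq]
  have hcurve_eq : (fun t => (fun y => deriv p (y 0) * q (zmap y)
          + p (y 0) * ∑ k, y k.succ / (1 - y 0) ^ 2 * qdf q k (zmap y))
        (Function.update x 0 t))
      = fun t => deriv p t * q (zmap (Function.update x 0 t))
          + p t * ∑ k, x k.succ / (1 - t) ^ 2 * qdf q k (zmap (Function.update x 0 t)) := by
    funext t
    simp [Function.update_apply, Fin.succ_ne_zero]
  rw [hcurve_eq]
  have hp' : ContDiff ℝ ((⊤ : ℕ∞) : WithTop ℕ∞) p := hp.of_le (by simp)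
  have hdp : Differentiable ℝ (deriv p) :=
    (contDiff_infty_iff_deriv.mp hp').2.differentiable (by simp)
  have h1 := ((hdp (x 0)).hasDerivAt).fun_mul (helperA hq x hx)
  simp only [Function.update_eq_self] at h1
  have hck : ∀ k : Fin (d + 1), HasDerivAt (fun t => x k.succ / (1 - t) ^ 2)
      (2 * x k.succ / (1 - x 0) ^ 3) (x 0) := by
    intro k
    have hden : ((1 - x 0) ^ 2 : ℝ) ≠ 0 := pow_ne_zero _ hu
    have hd : HasDerivAt (fun t : ℝ => (1 - t) ^ 2)
        ((2:ℕ) * (1 - x 0) ^ (2 - 1) * (0 - 1)) (x 0) :=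
      ((hasDerivAt_const _ 1).sub (hasDerivAt_id _)).pow 2
    have := (hasDerivAt_const (x 0) (x k.succ)).fun_div hd hden
    refine this.congr_deriv ?_
    field_simp
    ring
  have hterm : ∀ k : Fin (d + 1), HasDerivAt
      (fun t => x k.succ / (1 - t) ^ 2 * qdf q k (zmap (Function.update x 0 t)))
      (2 * x k.succ / (1 - x 0) ^ 3 * qdf q k (zmap x)
        + x k.succ / (1 - x 0) ^ 2
            * fderiv ℝ (qdf q k) (zmap x) (fun l => x l.succ / (1 - x 0) ^ 2)) (x 0) := by
    intro k
    have := (hck k).fun_mul (helperA (qdf_contDiff hq k) x hx)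
    simpa [Function.update_eq_self] using this
  have hsum := HasDerivAt.fun_sum (u := Finset.univ) fun k _ => hterm k
  have h2 := ((hp.differentiable (by simp) (x 0)).hasDerivAt).fun_mul hsum
  simp only [Function.update_eq_self] at h2
  have H := h1.fun_add h2
  rw [H.deriv]
  have e1 : fderiv ℝ q (zmap x) (fun j => x j.succ / (1 - x 0) ^ 2)
      = ∑ k, x k.succ / (1 - x 0) ^ 2 * qdf q k (zmap x) := by
    rw [fderiv_expand]; rfl
  have e2 : (∑ k, (2 * x k.succ / (1 - x 0) ^ 3 * qdf q k (zmap x)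
        + x k.succ / (1 - x 0) ^ 2
            * fderiv ℝ (qdf q k) (zmap x) (fun l => x l.succ / (1 - x 0) ^ 2)))
      = ∑ k, (2 * x k.succ / (1 - x 0) ^ 3 * qdf q k (zmap x)
        + x k.succ / (1 - x 0) ^ 2
            * ∑ l, x l.succ / (1 - x 0) ^ 2
                * fderiv ℝ (qdf q k) (zmap x) (Pi.single l 1)) :=
    Finset.sum_congr rfl fun k _ => by rw [fderiv_expand]
  rw [e1, e2]
  ring

end SecondDeriv

lemma gfix {n : ℕ} (g : Fin (n + 1) → ℝ) (j : Fin n)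
    (h : ((j.succ : Fin (n + 1)) : ℕ) - 1 < n + 1) :
    g ⟨((j.succ : Fin (n + 1)) : ℕ) - 1, h⟩ = g j.castSucc := by
  congr 1

/-- The operator `Ď2`, with `g k` representing the paper's `γ_{k+2}`
(paper's dimension is Lean's `d+1`). -/
noncomputable def D2op {d : ℕ} (g : Fin (d + 1) → ℝ) (f : (Fin (d + 1) → ℝ) → ℝ)
    (x : Fin (d + 1) → ℝ) : ℝ :=
  (1 - x 0) * pd 0 (pd 0 f) x
    + ∑ i ∈ Finset.Ioi (0 : Fin (d + 1)), x i * pd i (pd i f) x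
    - 2 * ∑ i ∈ Finset.Ioi (0 : Fin (d + 1)), x i * pd i (pd 0 f) x
    - ((∑ k, g k) + ((d : ℝ) + 1)) * pd 0 f x
    + ∑ i ∈ Finset.Ioi (0 : Fin (d + 1)),
        (g ⟨i.val - 1, lt_of_le_of_lt (Nat.sub_le _ _) i.isLt⟩ + 1) * pd i f x

/-- The Appell–Lauricella operator in `d+1` variables with parameters
`γ : Fin (d+2) → ℝ` (here used with the parameters `(γ₂,…,γ_{d+1})` of the paper,
`γ k` being the paper's `γ_{k+2}`). -/
noncomputable def Mop {d : ℕ} (γ : Fin (d + 2) → ℝ) (f : (Fin (d + 1) → ℝ) → ℝ)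
    (x : Fin (d + 1) → ℝ) : ℝ :=
  ∑ i, (1 - x i) * x i * pd i (pd i f) x
    - 2 * ∑ i : Fin (d + 1), ∑ l ∈ Finset.Ioi i, x i * x l * pd i (pd l f) x
    + ∑ i, ((γ i.castSucc + 1) - ((∑ k, γ k) + ((d : ℝ) + 1) + 1) * x i) * pd i f x

/-- Under the change of variables `z₁ = x₁`, `z_j = x_j/(1−x₁)`, if
`P(x) = p(z₁)q(z₂,…,z_d)` then
`Ď2[P] = (D2 p)(z₁) q(z) + (p(z₁)/(1−z₁)) (M_{d−1}^{γ₂,…,γ_{d+1}} q)(z)`,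
where `D2 = (1−z₁)∂²_{z₁} − (γ₂+⋯+γ_{d+1}+d)∂_{z₁}`.
(The paper's dimension `d ≥ 2` is Lean's `d+2`.) -/
theorem statement13 (d : ℕ) (g : Fin (d + 2) → ℝ) (p : ℝ → ℝ) (hp : ContDiff ℝ (⊤ : ℕ∞) p)
    (q : (Fin (d + 1) → ℝ) → ℝ) (hq : ContDiff ℝ (⊤ : ℕ∞) q)
    (x : Fin (d + 2) → ℝ) (hx : x 0 ≠ 1) :
    D2op g (fun y : Fin (d + 2) → ℝ =>
        p (y 0) * q (fun j : Fin (d + 1) => y j.succ / (1 - y 0))) x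
      = ((1 - x 0) * deriv (deriv p) (x 0)
            - ((∑ k, g k) + ((d : ℝ) + 2)) * deriv p (x 0))
            * q (fun j : Fin (d + 1) => x j.succ / (1 - x 0))
        + p (x 0) / (1 - x 0)
            * Mop g q (fun j : Fin (d + 1) => x j.succ / (1 - x 0)) := by
  have hu : (1 : ℝ) - x 0 ≠ 0 := sub_ne_zero.2 (Ne.symm hx)
  have hP : (fun y : Fin (d + 2) → ℝ =>
      p (y 0) * q (fun j : Fin (d + 1) => y j.succ / (1 - y 0)))
      = fun y => p (y 0) * q (zmap y) := rfl
  have hzx : (fun j : Fin (d + 1) => x j.succ / (1 - x 0)) = zmap x := rfl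
  rw [hP, hzx]
  simp only [D2op, Mop]
  rw [sum_Ioi_zero, sum_Ioi_zero, sum_Ioi_zero]
  simp only [gfix g]
  simp only [pd00 hp hq x hx, pdj0 hp hq x hx, pdjj hp hq x hx, pdpd_eq hq]
  simp only [first0 hp hq x hx, firstj hp hq x hx, pd_eq_qdf hq]
  have hSg : (∑ k : Fin (d+1+1), g k) = ∑ k : Fin (d+2), g k := rfl
  rw [hSg]
  have c1 : (∑ k : Fin (d+1), x k.succ / (1 - x 0) ^ 2 * qdf q k (zmap x))
      = (∑ k : Fin (d+1), x k.succ * qdf q k (zmap x)) / (1 - x 0) ^ 2 := by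
    rw [Finset.sum_div]; exact Finset.sum_congr rfl fun k _ => by try field_simp; try ring; try tauto
  have c2a : (∑ k : Fin (d+1), (2 * x k.succ / (1 - x 0) ^ 3 * qdf q k (zmap x)
        + x k.succ / (1 - x 0) ^ 2 * ∑ l : Fin (d+1),
            x l.succ / (1 - x 0) ^ 2 * fderiv ℝ (qdf q k) (zmap x) (Pi.single l 1)))
      = 2 * (∑ k : Fin (d+1), x k.succ * qdf q k (zmap x)) / (1 - x 0) ^ 3
        + (∑ j : Fin (d+1), ∑ k : Fin (d+1),
            x j.succ * x k.succ * fderiv ℝ (qdf q k) (zmap x) (Pi.single j 1)) / (1 - x 0) ^ 4 := by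
    rw [Finset.sum_add_distrib]
    congr 1
    · rw [Finset.mul_sum, Finset.sum_div]
      exact Finset.sum_congr rfl fun k _ => by try field_simp; try ring; try tauto
    · calc (∑ k : Fin (d+1), x k.succ / (1 - x 0) ^ 2 * ∑ l : Fin (d+1),
            x l.succ / (1 - x 0) ^ 2 * fderiv ℝ (qdf q k) (zmap x) (Pi.single l 1))
          = ∑ k : Fin (d+1), ∑ l : Fin (d+1), x k.succ / (1 - x 0) ^ 2
              * (x l.succ / (1 - x 0) ^ 2 * fderiv ℝ (qdf q k) (zmap x) (Pi.single l 1)) :=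
            Finset.sum_congr rfl fun k _ => Finset.mul_sum _ _ _
        _ = ∑ l : Fin (d+1), ∑ k : Fin (d+1), x k.succ / (1 - x 0) ^ 2
              * (x l.succ / (1 - x 0) ^ 2 * fderiv ℝ (qdf q k) (zmap x) (Pi.single l 1)) :=
            Finset.sum_comm
        _ = ∑ j : Fin (d+1), (∑ k : Fin (d+1),
              x j.succ * x k.succ * fderiv ℝ (qdf q k) (zmap x) (Pi.single j 1)) / (1 - x 0) ^ 4 :=
            Finset.sum_congr rfl fun l _ => by
              rw [Finset.sum_div]; exact Finset.sum_congr rfl fun k _ => by try field_simp; try ring; try tauto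
        _ = (∑ j : Fin (d+1), ∑ k : Fin (d+1),
              x j.succ * x k.succ * fderiv ℝ (qdf q k) (zmap x) (Pi.single j 1)) / (1 - x 0) ^ 4 :=
            (Finset.sum_div _ _ _).symm
  have c3 : (∑ j : Fin (d+1), x j.succ * (p (x 0) * ((1 - x 0)⁻¹
        * ((1 - x 0)⁻¹ * fderiv ℝ (qdf q j) (zmap x) (Pi.single j 1)))))
      = p (x 0) * (∑ k : Fin (d+1),
          x k.succ * fderiv ℝ (qdf q k) (zmap x) (Pi.single k 1)) / (1 - x 0) ^ 2 := by
    rw [Finset.mul_sum, Finset.sum_div]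
    exact Finset.sum_congr rfl fun k _ => by try field_simp; try ring; try tauto
  have c4 : (∑ j : Fin (d+1), x j.succ * (deriv p (x 0) * ((1 - x 0)⁻¹ * qdf q j (zmap x))
        + p (x 0) * (1 / (1 - x 0) ^ 2 * qdf q j (zmap x)
            + ∑ k : Fin (d+1), x k.succ / (1 - x 0) ^ 2
                * ((1 - x 0)⁻¹ * fderiv ℝ (qdf q k) (zmap x) (Pi.single j 1)))))
      = deriv p (x 0) * (∑ k : Fin (d+1), x k.succ * qdf q k (zmap x)) / (1 - x 0)
        + (p (x 0) * (∑ k : Fin (d+1), x k.succ * qdf q k (zmap x)) / (1 - x 0) ^ 2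
          + p (x 0) * (∑ j : Fin (d+1), ∑ k : Fin (d+1),
              x j.succ * x k.succ * fderiv ℝ (qdf q k) (zmap x) (Pi.single j 1)) / (1 - x 0) ^ 3) := by
    calc (∑ j : Fin (d+1), x j.succ * (deriv p (x 0) * ((1 - x 0)⁻¹ * qdf q j (zmap x))
        + p (x 0) * (1 / (1 - x 0) ^ 2 * qdf q j (zmap x)
            + ∑ k : Fin (d+1), x k.succ / (1 - x 0) ^ 2
                * ((1 - x 0)⁻¹ * fderiv ℝ (qdf q k) (zmap x) (Pi.single j 1)))))
        = ∑ j : Fin (d+1), (deriv p (x 0) * (x j.succ * qdf q j (zmap x)) / (1 - x 0)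
            + (p (x 0) * (x j.succ * qdf q j (zmap x)) / (1 - x 0) ^ 2
              + p (x 0) * (∑ k : Fin (d+1),
                  x j.succ * x k.succ * fderiv ℝ (qdf q k) (zmap x) (Pi.single j 1)) / (1 - x 0) ^ 3)) := by
          refine Finset.sum_congr rfl fun j _ => ?_
          rw [show (∑ k : Fin (d+1), x k.succ / (1 - x 0) ^ 2
                * ((1 - x 0)⁻¹ * fderiv ℝ (qdf q k) (zmap x) (Pi.single j 1)))
              = (∑ k : Fin (d+1), x k.succ * fderiv ℝ (qdf q k) (zmap x) (Pi.single j 1))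
                  / (1 - x 0) ^ 3 from by
            rw [Finset.sum_div]; exact Finset.sum_congr rfl fun k _ => by try field_simp; try ring; try tauto]
          rw [show (∑ k : Fin (d+1), x j.succ * x k.succ * fderiv ℝ (qdf q k) (zmap x) (Pi.single j 1))
              = x j.succ * ∑ k : Fin (d+1), x k.succ * fderiv ℝ (qdf q k) (zmap x) (Pi.single j 1) from by
            rw [Finset.mul_sum]; exact Finset.sum_congr rfl fun k _ => mul_assoc _ _ _]
          try field_simp
          try ring
          try tauto
      _ = deriv p (x 0) * (∑ k : Fin (d+1), x k.succ * qdf q k (zmap x)) / (1 - x 0)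
          + (p (x 0) * (∑ k : Fin (d+1), x k.succ * qdf q k (zmap x)) / (1 - x 0) ^ 2
            + p (x 0) * (∑ j : Fin (d+1), ∑ k : Fin (d+1),
                x j.succ * x k.succ * fderiv ℝ (qdf q k) (zmap x) (Pi.single j 1)) / (1 - x 0) ^ 3) := by
          rw [Finset.sum_add_distrib, Finset.sum_add_distrib]
          congr 1
          · rw [Finset.mul_sum, Finset.sum_div]
          congr 1
          · rw [Finset.mul_sum, Finset.sum_div]
          · rw [Finset.mul_sum, Finset.sum_div]
  have c5 : (∑ j : Fin (d+1), (g j.castSucc + 1) * (p (x 0) * ((1 - x 0)⁻¹ * qdf q j (zmap x))))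
      = p (x 0) * (∑ k : Fin (d+1), (g k.castSucc + 1) * qdf q k (zmap x)) / (1 - x 0) := by
    rw [Finset.mul_sum, Finset.sum_div]
    exact Finset.sum_congr rfl fun k _ => by try field_simp; try ring; try tauto
  have c6 : (∑ i : Fin (d+1), (1 - zmap x i) * zmap x i
        * fderiv ℝ (qdf q i) (zmap x) (Pi.single i 1))
      = (∑ k : Fin (d+1), x k.succ * fderiv ℝ (qdf q k) (zmap x) (Pi.single k 1)) / (1 - x 0)
        - (∑ k : Fin (d+1), x k.succ * x k.succ
            * fderiv ℝ (qdf q k) (zmap x) (Pi.single k 1)) / (1 - x 0) ^ 2 := by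
    rw [Finset.sum_div, Finset.sum_div, ← Finset.sum_sub_distrib]
    refine Finset.sum_congr rfl fun k _ => ?_
    rw [show zmap x k = x k.succ / (1 - x 0) from rfl]
    field_simp
  have c7 : (2 * ∑ i : Fin (d+1), ∑ l ∈ Finset.Ioi i, zmap x i * zmap x l
        * fderiv ℝ (qdf q l) (zmap x) (Pi.single i 1))
      = (∑ j : Fin (d+1), ∑ k : Fin (d+1),
          x j.succ * x k.succ * fderiv ℝ (qdf q k) (zmap x) (Pi.single j 1)) / (1 - x 0) ^ 2
        - (∑ k : Fin (d+1), x k.succ * x k.succ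
            * fderiv ℝ (qdf q k) (zmap x) (Pi.single k 1)) / (1 - x 0) ^ 2 := by
    have hsymm : ∀ i l : Fin (d+1), zmap x i * zmap x l
        * fderiv ℝ (qdf q l) (zmap x) (Pi.single i 1)
        = zmap x l * zmap x i * fderiv ℝ (qdf q i) (zmap x) (Pi.single l 1) := fun i l => by
      rw [qdf_fderiv_symm hq i l (zmap x)]; ring
    have hds := double_sum_symm (fun i l => zmap x i * zmap x l
        * fderiv ℝ (qdf q l) (zmap x) (Pi.single i 1)) hsymm
    have hFf : (∑ i : Fin (d+1), ∑ l : Fin (d+1), zmap x i * zmap x l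
          * fderiv ℝ (qdf q l) (zmap x) (Pi.single i 1))
        = (∑ j : Fin (d+1), ∑ k : Fin (d+1),
            x j.succ * x k.succ * fderiv ℝ (qdf q k) (zmap x) (Pi.single j 1)) / (1 - x 0) ^ 2 := by
      rw [Finset.sum_div]
      refine Finset.sum_congr rfl fun i _ => ?_
      rw [Finset.sum_div]
      refine Finset.sum_congr rfl fun l _ => ?_
      rw [show zmap x i = x i.succ / (1 - x 0) from rfl,
        show zmap x l = x l.succ / (1 - x 0) from rfl]
      field_simp
      try ring
      try tauto
    have hFd : (∑ i : Fin (d+1), zmap x i * zmap x i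
          * fderiv ℝ (qdf q i) (zmap x) (Pi.single i 1))
        = (∑ k : Fin (d+1), x k.succ * x k.succ
            * fderiv ℝ (qdf q k) (zmap x) (Pi.single k 1)) / (1 - x 0) ^ 2 := by
      rw [Finset.sum_div]
      refine Finset.sum_congr rfl fun i _ => ?_
      rw [show zmap x i = x i.succ / (1 - x 0) from rfl]
      field_simp
      try ring
      try tauto
    rw [hFf, hFd] at hds
    linarith
  have c8 : (∑ i : Fin (d+1), (g i.castSucc + 1
        - (∑ k : Fin (d+2), g k + ((d:ℝ) + 1) + 1) * zmap x i) * qdf q i (zmap x))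
      = (∑ k : Fin (d+1), (g k.castSucc + 1) * qdf q k (zmap x))
        - (∑ k : Fin (d+2), g k + ((d:ℝ) + 1) + 1)
            * (∑ k : Fin (d+1), x k.succ * qdf q k (zmap x)) / (1 - x 0) := by
    rw [Finset.mul_sum, Finset.sum_div, ← Finset.sum_sub_distrib]
    refine Finset.sum_congr rfl fun k _ => ?_
    rw [show zmap x k = x k.succ / (1 - x 0) from rfl]
    try field_simp
    try ring
    try tauto
  rw [c1, c2a, c3, c4, c5, c6, c7, c8]
  push_cast
  field_simp
  ring
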